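/- arXiv:1701.01111 — 2 statements merged into one kernel-verified Lean document; each statement's English description precedes it below -/
import Mathlib

section
/- Let n ≥ 2 be a natural number and let N be any subspace of C[0,1] with dimension < n. Then sup{inf{‖Vf − g‖_∞ : g ∈ N} : f ∈ L¹(0,1), ‖f‖₁ ≤ 1} ≥ 1/2. (Consequently the n-th Kolmogorov number of V satisfies d_n(V) ≥ 1/2.) -/
open MeasureTheory

noncomputable section

/-- The space `L¹(0,1)` of Lebesgue integrable functions on `(0,1)`. -/
abbrev L1 : Type := Lp ℝ 1 ((volume : Measure ℝ).restrict (Set.Ioo (0:ℝ) 1))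

/-- The space `C[0,1]` of continuous real functions on `[0,1]` with the supremum norm. -/
abbrev C01 : Type := C(Set.Icc (0:ℝ) 1, ℝ)

/-- `V` is the Volterra operator: `(V f)(t) = ∫₀ᵗ f(s) ds` for `f ∈ L¹(0,1)`. -/
def IsVolterra (V : L1 →L[ℝ] C01) : Prop :=
  ∀ f : L1, ∀ t : Set.Icc (0:ℝ) 1,
    V f t = ∫ s in Set.Ioo (0:ℝ) (t:ℝ), f s
      ∂((volume : Measure ℝ).restrict (Set.Ioo (0:ℝ) 1))

/-! The Volterra operator maps the normalised bumps supported on the disjoint intervals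
`(1/(k+2), 1/(k+1))` to ramps rising from `0` to `1` across their supports, so these images
are pairwise at sup-distance at least `1`. If all of them lay within `c` of the
finite-dimensional subspace `N`, their near-best approximants in `N` would form a bounded
sequence, two terms of which are arbitrarily close by Bolzano–Weierstrass; the triangle
inequality then forces `1 ≤ 2c`. -/

open Metric Set Bornology

theorem sInf_norm_sub_eq_infDist {E : Type*} [SeminormedAddCommGroup E] (x : E) (s : Set E) :
    sInf {d : ℝ | ∃ g ∈ s, d = ‖x - g‖} = infDist x s := by
  rw [infDist_eq_iInf, iInf]
  congr 1
  ext d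
  simp [dist_eq_norm, eq_comm]

theorem exists_ne_dist_lt_of_isBounded_range {X : Type*} [PseudoMetricSpace X] [ProperSpace X]
    {g : ℕ → X} (hg : IsBounded (range g)) {ε : ℝ} (hε : 0 < ε) :
    ∃ i j, i ≠ j ∧ dist (g i) (g j) < ε := by
  obtain ⟨_, -, φ, hφ, hlim⟩ := tendsto_subseq_of_bounded hg fun n ↦ mem_range_self n
  obtain ⟨k, hk⟩ := Metric.cauchySeq_iff'.mp hlim.cauchySeq ε hε
  exact ⟨φ (k + 1), φ k, hφ.injective.ne k.succ_ne_self, hk (k + 1) k.le_succ⟩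

theorem one_le_two_mul_of_forall_infDist_le {E : Type*} [NormedAddCommGroup E]
    [NormedSpace ℝ E] (N : Submodule ℝ E) [FiniteDimensional ℝ N]
    {x : ℕ → E} (hx : IsBounded (range x)) (hsep : Pairwise fun i j ↦ 1 ≤ dist (x i) (x j))
    {c : ℝ} (hc : ∀ i, infDist (x i) N ≤ c) : 1 ≤ 2 * c := by
  refine le_of_forall_pos_lt_add fun δ hδ ↦ ?_
  have hnear : ∀ i, ∃ g : N, dist (x i) g < c + δ / 4 := fun i ↦ by
    obtain ⟨g, hg, hdist⟩ := (infDist_lt_iff ⟨0, N.zero_mem⟩).mp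
      ((hc i).trans_lt (lt_add_of_pos_right c (by positivity : 0 < δ / 4)))
    exact ⟨⟨g, hg⟩, hdist⟩
  choose g hg using hnear
  obtain ⟨C, hC⟩ := isBounded_iff_forall_norm_le.mp hx
  have hg_bdd : IsBounded (range g) := isBounded_iff_forall_norm_le.mpr
    ⟨C + (c + δ / 4), forall_mem_range.mpr fun i ↦ by
      have := norm_le_norm_add_norm_sub' (g i : E) (x i)
      rw [norm_sub_rev, ← dist_eq_norm] at this
      linarith [hC _ (mem_range_self i), hg i, Submodule.coe_norm (g i)]⟩
  obtain ⟨i, j, hij, hgij⟩ := exists_ne_dist_lt_of_isBounded_range hg_bdd (half_pos hδ)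
  calc 1 ≤ dist (x i) (x j) := hsep hij
    _ ≤ dist (x i) (g i) + dist (g i : E) (g j) + dist (g j : E) (x j) := dist_triangle4 _ _ _ _
    _ < (c + δ / 4) + δ / 2 + (c + δ / 4) := by
      rw [dist_comm (g j : E)]
      gcongr
      exacts [hg i, hgij, hg j]
    _ = 2 * c + δ := by ring

notation "μ₀₁" => Measure.restrict (volume : Measure ℝ) (Ioo (0:ℝ) 1)

def bump (a b : ℝ) : L1 :=
  indicatorConstLp 1 measurableSet_Ioo (measure_ne_top μ₀₁ (Ioo a b)) (b - a)⁻¹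

theorem measureReal_Ioo_of_subset_unitInterval {a b : ℝ} (ha : 0 ≤ a) (hab : a ≤ b)
    (hb : b ≤ 1) :
    (μ₀₁).real (Ioo a b) = b - a := by
  rw [measureReal_restrict_apply measurableSet_Ioo, inter_eq_left.mpr (Ioo_subset_Ioo ha hb),
    Real.volume_real_Ioo_of_le hab]

theorem norm_bump {a b : ℝ} (ha : 0 ≤ a) (hab : a < b) (hb : b ≤ 1) : ‖bump a b‖ = 1 := by
  rw [bump, norm_indicatorConstLp one_ne_zero ENNReal.one_ne_top,
    measureReal_Ioo_of_subset_unitInterval ha hab.le hb]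
  simp [abs_of_pos (sub_pos.mpr hab), (sub_pos.mpr hab).ne']

theorem setIntegral_bump (a b t : ℝ) :
    ∫ s in Ioo 0 t, bump a b s ∂μ₀₁ = (b - a)⁻¹ * (μ₀₁).real (Ioo 0 t ∩ Ioo a b) := by
  rw [bump, integral_congr_ae (ae_restrict_of_ae indicatorConstLp_coeFn),
    setIntegral_indicator measurableSet_Ioo, setIntegral_const, smul_eq_mul, mul_comm]

namespace IsVolterra

variable {V : L1 →L[ℝ] C01} (hV : IsVolterra V)
include hV

theorem apply_bump_of_le_left {a b : ℝ} (t : Icc (0:ℝ) 1) (ht : (t : ℝ) ≤ a) :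
    V (bump a b) t = 0 := by
  rw [hV, setIntegral_bump, Ioo_inter_Ioo,
    Ioo_eq_empty_of_le ((min_le_left _ _).trans (ht.trans (le_max_right _ _))),
    measureReal_empty, mul_zero]

theorem apply_bump_of_right_le {a b : ℝ} (ha : 0 ≤ a) (hab : a < b) (hb : b ≤ 1)
    (t : Icc (0:ℝ) 1) (ht : b ≤ t) : V (bump a b) t = 1 := by
  rw [hV, setIntegral_bump, inter_eq_right.mpr (Ioo_subset_Ioo ha ht),
    measureReal_Ioo_of_subset_unitInterval ha hab.le hb, inv_mul_cancel₀ (sub_pos.mpr hab).ne']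

theorem one_le_dist_apply_bump {a b a' b' : ℝ} (ha' : 0 ≤ a') (hab' : a' < b') (hba : b' ≤ a)
    (ha : a ≤ 1) : 1 ≤ dist (V (bump a b)) (V (bump a' b')) := by
  have ha1 : a ∈ Icc (0:ℝ) 1 := ⟨ha'.trans (hab'.le.trans hba), ha⟩
  calc (1 : ℝ) = dist (V (bump a b) ⟨a, ha1⟩) (V (bump a' b') ⟨a, ha1⟩) := by
        rw [hV.apply_bump_of_le_left (a := a) _ le_rfl,
          hV.apply_bump_of_right_le ha' hab' (hba.trans ha1.2) _ hba]
        simp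
    _ ≤ _ := ContinuousMap.dist_apply_le_dist _

end IsVolterra

def harmonicBump (k : ℕ) : L1 := bump (k + 2 : ℝ)⁻¹ (k + 1 : ℝ)⁻¹

theorem inv_add_two_lt_inv_add_one (k : ℕ) : (k + 2 : ℝ)⁻¹ < (k + 1 : ℝ)⁻¹ :=
  inv_strictAnti₀ (by positivity) (by linarith)

theorem norm_harmonicBump (k : ℕ) : ‖harmonicBump k‖ = 1 :=
  norm_bump (by positivity) (inv_add_two_lt_inv_add_one k)
    (inv_le_one_of_one_le₀ (by linarith [k.cast_nonneg (α := ℝ)]))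

theorem IsVolterra.pairwise_one_le_dist_harmonicBump {V : L1 →L[ℝ] C01} (hV : IsVolterra V) :
    Pairwise fun i j ↦ 1 ≤ dist (V (harmonicBump i)) (V (harmonicBump j)) := by
  intro i j hij
  wlog hlt : i < j generalizing i j
  · rw [dist_comm]
    exact this hij.symm (hij.lt_or_gt.resolve_left hlt)
  have hij' : (i : ℝ) + 1 ≤ j := by exact_mod_cast hlt
  exact hV.one_le_dist_apply_bump (by positivity) (inv_add_two_lt_inv_add_one j)
    (inv_anti₀ (by positivity) (by linarith))
    (inv_le_one_of_one_le₀ (by linarith [i.cast_nonneg (α := ℝ)]))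

theorem kolmogorov_lower_bound_volterra_general (n : ℕ)
    (V : L1 →L[ℝ] C01) (hV : IsVolterra V)
    (N : Submodule ℝ C01) (hN : Module.rank ℝ N < (n : Cardinal)) :
    1 / 2 ≤ sSup {s : ℝ | ∃ f : L1, ‖f‖ ≤ 1 ∧
      s = sInf {d : ℝ | ∃ g ∈ N, d = ‖V f - g‖}} := by
  have : FiniteDimensional ℝ N :=
    Module.rank_lt_aleph0_iff.mp (hN.trans Cardinal.natCast_lt_aleph0)
  simp_rw [← SetLike.mem_coe, sInf_norm_sub_eq_infDist]
  have hbdd : BddAbove {s : ℝ | ∃ f : L1, ‖f‖ ≤ 1 ∧ s = infDist (V f) N} := by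
    refine ⟨‖V‖, ?_⟩
    rintro _ ⟨f, hf, rfl⟩
    simpa using (infDist_le_dist_of_mem N.zero_mem).trans (V.unit_le_opNorm f hf)
  have hrange : IsBounded (range fun k ↦ V (harmonicBump k)) :=
    isBounded_iff_forall_norm_le.mpr ⟨‖V‖, forall_mem_range.mpr fun k ↦
      V.unit_le_opNorm _ (norm_harmonicBump k).le⟩
  have := one_le_two_mul_of_forall_infDist_le N hrange hV.pairwise_one_le_dist_harmonicBump
    fun k ↦ le_csSup hbdd ⟨harmonicBump k, (norm_harmonicBump k).le, rfl⟩
  linarith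

/-- Lower bound for the Kolmogorov numbers of the Volterra operator: for any subspace
`N ⊆ C[0,1]` with `dim N < n` (`n ≥ 2`), the deviation of `V(B_{L¹})` from `N` is `≥ 1/2`. -/
theorem kolmogorov_lower_bound_volterra (n : ℕ) (hn : 2 ≤ n)
    (V : L1 →L[ℝ] C01) (hV : IsVolterra V)
    (N : Submodule ℝ C01) (hN : Module.rank ℝ N < (n : Cardinal)) :
    1 / 2 ≤ sSup {s : ℝ | ∃ f : L1, ‖f‖ ≤ 1 ∧
      s = sInf {d : ℝ | ∃ g ∈ N, d = ‖V f - g‖}} :=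
  kolmogorov_lower_bound_volterra_general n V hV N hN
end
end

section
/- Let n ≥ 2 be a natural number and let M be any closed subspace of L¹(0,1) with codimension < n. Then sup{‖Vf‖_∞ : f ∈ M, ‖f‖₁ ≤ 1} ≥ 1/2. (Consequently the n-th Gelfand number of V satisfies c_n(V) ≥ 1/2.) -/
open MeasureTheory

noncomputable section

/-! In a closed subspace `M` of finite codimension, any bounded sequence `uₖ` has two terms whose
difference `uᵢ - uⱼ` lies within `δ` of `M`, because its image in the finite-dimensional quotient
has a Cauchy subsequence. Take for `uₖ` the `L¹`-normalised indicators of the disjoint intervals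
`(1 - 2⁻ᵏ, 1 - 2⁻ᵏ⁻¹)`: for `i < j`, `V (uᵢ - uⱼ)` equals `1` at the right end of the `i`-th
interval. The element `m ∈ M` near `uᵢ - uⱼ` thus has `‖m‖ ≤ 2 + δ` and `‖V m‖ ≥ 1 - ‖V‖ δ`;
let `δ → 0`. -/

open Set Filter Topology

theorem exists_lt_dist_lt_of_isBounded_range {X : Type*} [PseudoMetricSpace X] [ProperSpace X]
    {u : ℕ → X} (hu : Bornology.IsBounded (range u)) {ε : ℝ} (hε : 0 < ε) :
    ∃ i j, i < j ∧ dist (u i) (u j) < ε := by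
  obtain ⟨x, -, φ, hφ, hconv⟩ :=
    hu.isCompact_closure.tendsto_subseq fun k => subset_closure (mem_range_self k)
  obtain ⟨N, hN⟩ := Metric.cauchySeq_iff'.mp hconv.cauchySeq ε hε
  exact ⟨φ N, φ (N + 1), hφ N.lt_succ_self, dist_comm (u (φ N)) _ ▸ hN (N + 1) N.le_succ⟩

theorem Submodule.exists_lt_exists_mem_norm_sub_sub_lt {E : Type*} [NormedAddCommGroup E]
    [NormedSpace ℝ E] (M : Submodule ℝ E) [IsClosed (M : Set E)]
    [FiniteDimensional ℝ (E ⧸ M)] {u : ℕ → E} {R : ℝ} (hu : ∀ k, ‖u k‖ ≤ R) {ε : ℝ}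
    (hε : 0 < ε) : ∃ i j, i < j ∧ ∃ m ∈ M, ‖u i - u j - m‖ < ε := by
  have hbdd : Bornology.IsBounded (range fun k => M.mkQ (u k)) :=
    isBounded_iff_forall_norm_le.mpr ⟨R, forall_mem_range.mpr fun k =>
      (Submodule.Quotient.norm_mk_le M (u k)).trans (hu k)⟩
  obtain ⟨i, j, hij, hdist⟩ := exists_lt_dist_lt_of_isBounded_range hbdd hε
  rw [dist_eq_norm, ← map_sub] at hdist
  obtain ⟨a, ha, ha_lt⟩ := QuotientAddGroup.norm_lt_iff.mp hdist
  refine ⟨i, j, hij, u i - u j - a, ?_, by rwa [sub_sub_cancel]⟩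
  rw [← Submodule.Quotient.eq]
  exact ha.symm

theorem one_half_le_sSup_norm_apply_of_finiteDimensional_quotient {E F : Type*}
    [NormedAddCommGroup E] [NormedSpace ℝ E] [SeminormedAddCommGroup F] [NormedSpace ℝ F]
    (T : E →L[ℝ] F) (M : Submodule ℝ E) [IsClosed (M : Set E)]
    [FiniteDimensional ℝ (E ⧸ M)] {u : ℕ → E} (hu : ∀ k, ‖u k‖ ≤ 1)
    (hTu : ∀ i j, i < j → 1 ≤ ‖T (u i - u j)‖) :
    1 / 2 ≤ sSup {s : ℝ | ∃ f : E, f ∈ M ∧ ‖f‖ ≤ 1 ∧ s = ‖T f‖} := by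
  set S := {s : ℝ | ∃ f : E, f ∈ M ∧ ‖f‖ ≤ 1 ∧ s = ‖T f‖}
  have hS : BddAbove S := ⟨‖T‖, by
    rintro _ ⟨f, -, hf, rfl⟩
    exact T.le_of_opNorm_le_of_le le_rfl hf |>.trans_eq (mul_one _)⟩
  have key : ∀ δ > 0, (1 - ‖T‖ * δ) / (2 + δ) ≤ sSup S := by
    intro δ hδ
    obtain ⟨i, j, hij, m, hm, hclose⟩ := M.exists_lt_exists_mem_norm_sub_sub_lt hu hδ
    have hm_norm : ‖m‖ ≤ 2 + δ := calc
      ‖m‖ = ‖u i - u j - (u i - u j - m)‖ := by rw [sub_sub_cancel]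
      _ ≤ ‖u i‖ + ‖u j‖ + ‖u i - u j - m‖ :=
        (norm_sub_le _ _).trans (by gcongr; exact norm_sub_le _ _)
      _ ≤ 2 + δ := by linarith [hu i, hu j]
    have hTm : 1 ≤ ‖T m‖ + ‖T‖ * δ := calc
      1 ≤ ‖T (u i - u j)‖ := hTu i j hij
      _ = ‖T m + T (u i - u j - m)‖ := by rw [← map_add, add_sub_cancel]
      _ ≤ ‖T m‖ + ‖T‖ * δ :=
        (norm_add_le _ _).trans (by gcongr; exact (T.le_opNorm _).trans (by gcongr))
    have h2δ : 0 < 2 + δ := by positivity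
    refine le_csSup_of_le hS ⟨(2 + δ)⁻¹ • m, M.smul_mem _ hm, ?_, rfl⟩ ?_
    · rw [norm_smul, norm_inv, Real.norm_of_nonneg h2δ.le]
      exact inv_mul_le_one_of_le₀ hm_norm h2δ.le
    · rw [map_smul, norm_smul, norm_inv, Real.norm_of_nonneg h2δ.le, div_eq_inv_mul]
      gcongr
      linarith
  have hlim : Tendsto (fun δ => (1 - ‖T‖ * δ) / (2 + δ)) (𝓝[>] 0) (𝓝 (1 / 2)) := by
    have : ContinuousAt (fun δ : ℝ => (1 - ‖T‖ * δ) / (2 + δ)) 0 := by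
      fun_prop (disch := norm_num)
    simpa using this.tendsto.mono_left nhdsWithin_le_nhds
  exact le_of_tendsto hlim (eventually_nhdsWithin_of_forall key)

def intervalBump (a b : ℝ) : L1 :=
  indicatorConstLp 1 measurableSet_Ioo
    ((Measure.restrict_apply_le _ (Ioo a b)).trans_lt measure_Ioo_lt_top).ne (b - a)⁻¹

theorem volume_restrict_Ioo_zero_one_real_Ioo {a b : ℝ} (ha : 0 ≤ a) (hab : a ≤ b)
    (hb : b ≤ 1) :
    (volume.restrict (Ioo (0 : ℝ) 1)).real (Ioo a b) = b - a := by
  rw [measureReal_restrict_apply measurableSet_Ioo, inter_eq_left.2 (Ioo_subset_Ioo ha hb),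
    Real.volume_real_Ioo_of_le hab]

theorem norm_intervalBump {a b : ℝ} (ha : 0 ≤ a) (hab : a < b) (hb : b ≤ 1) :
    ‖intervalBump a b‖ = 1 := by
  rw [intervalBump, norm_indicatorConstLp one_ne_zero ENNReal.one_ne_top,
    volume_restrict_Ioo_zero_one_real_Ioo ha hab.le hb]
  simp [abs_of_pos (sub_pos.2 hab), (sub_pos.2 hab).ne']

theorem IsVolterra.apply_intervalBump {V : L1 →L[ℝ] C01} (hV : IsVolterra V) (a b : ℝ)
    (t : Icc (0 : ℝ) 1) :
    V (intervalBump a b) t =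
      (volume.restrict (Ioo (0 : ℝ) 1)).real (Ioo a b ∩ Ioo 0 t) * (b - a)⁻¹ := by
  rw [hV, intervalBump, setIntegral_indicatorConstLp measurableSet_Ioo, smul_eq_mul]

theorem IsVolterra.apply_intervalBump_of_le {V : L1 →L[ℝ] C01} (hV : IsVolterra V) {a b : ℝ}
    (ha : 0 ≤ a) (hab : a < b) {t : Icc (0 : ℝ) 1} (hbt : b ≤ t) :
    V (intervalBump a b) t = 1 := by
  rw [hV.apply_intervalBump, inter_eq_left.2 (Ioo_subset_Ioo ha hbt),
    volume_restrict_Ioo_zero_one_real_Ioo ha hab.le (hbt.trans t.2.2),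
    mul_inv_cancel₀ (sub_pos.2 hab).ne']

theorem IsVolterra.apply_intervalBump_of_ge {V : L1 →L[ℝ] C01} (hV : IsVolterra V) {a b : ℝ}
    {t : Icc (0 : ℝ) 1} (hta : t ≤ a) :
    V (intervalBump a b) t = 0 := by
  rw [hV.apply_intervalBump, Ioo_inter_Ioo]
  simp [Ioo_eq_empty (not_lt.2 ((min_le_right _ _).trans (hta.trans (le_max_left _ _))))]

theorem IsVolterra.one_le_norm_apply_intervalBump_sub {V : L1 →L[ℝ] C01} (hV : IsVolterra V)
    {a b c d : ℝ} (ha : 0 ≤ a) (hab : a < b) (hb : b ≤ 1) (hbc : b ≤ c) :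
    1 ≤ ‖V (intervalBump a b - intervalBump c d)‖ := by
  let t : Icc (0 : ℝ) 1 := ⟨b, ha.trans hab.le, hb⟩
  calc (1 : ℝ) = V (intervalBump a b - intervalBump c d) t := by
        rw [map_sub, ContinuousMap.sub_apply, hV.apply_intervalBump_of_le ha hab le_rfl,
          hV.apply_intervalBump_of_ge hbc, sub_zero]
    _ ≤ ‖V (intervalBump a b - intervalBump c d)‖ :=
        (Real.le_norm_self _).trans (ContinuousMap.norm_coe_le_norm _ t)

theorem gelfand_lower_bound_volterra_general (n : ℕ)
    (V : L1 →L[ℝ] C01) (hV : IsVolterra V)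
    (M : Submodule ℝ L1) (hMclosed : IsClosed (M : Set L1))
    (hM : Module.rank ℝ (L1 ⧸ M) < (n : Cardinal)) :
    1 / 2 ≤ sSup {s : ℝ | ∃ f : L1, f ∈ M ∧ ‖f‖ ≤ 1 ∧ s = ‖V f‖} := by
  have : IsClosed (M : Set L1) := hMclosed
  have : FiniteDimensional ℝ (L1 ⧸ M) :=
    Module.rank_lt_aleph0_iff.mp (hM.trans Cardinal.natCast_lt_aleph0)
  let a : ℕ → ℝ := fun k => 1 - (1 / 2) ^ k
  have ha_mono : StrictMono a := fun i j hij =>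
    sub_lt_sub_left (pow_right_strictAnti₀ (by norm_num) (by norm_num) hij) 1
  have ha_nonneg : ∀ k, 0 ≤ a k := fun k => sub_nonneg.2 (pow_le_one₀ (by norm_num) (by norm_num))
  have ha_le_one : ∀ k, a k ≤ 1 := fun k => sub_le_self _ (by positivity)
  exact one_half_le_sSup_norm_apply_of_finiteDimensional_quotient V M
    (u := fun k => intervalBump (a k) (a (k + 1)))
    (fun k => (norm_intervalBump (ha_nonneg k) (ha_mono k.lt_succ_self) (ha_le_one _)).le)
    fun i j hij => hV.one_le_norm_apply_intervalBump_sub (ha_nonneg i) (ha_mono i.lt_succ_self)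
      (ha_le_one _) (ha_mono.monotone hij)

/-- Lower bound for the Gelfand numbers of the Volterra operator: for any closed subspace
`M ⊆ L¹(0,1)` of codimension `< n` (`n ≥ 2`), `sup {‖Vf‖_∞ : f ∈ M, ‖f‖₁ ≤ 1} ≥ 1/2`. -/
theorem gelfand_lower_bound_volterra (n : ℕ) (hn : 2 ≤ n)
    (V : L1 →L[ℝ] C01) (hV : IsVolterra V)
    (M : Submodule ℝ L1) (hMclosed : IsClosed (M : Set L1))
    (hM : Module.rank ℝ (L1 ⧸ M) < (n : Cardinal)) :
    1 / 2 ≤ sSup {s : ℝ | ∃ f : L1, f ∈ M ∧ ‖f‖ ≤ 1 ∧ s = ‖V f‖} :=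
  gelfand_lower_bound_volterra_general n V hV M hMclosed hM
end
end
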